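/- One-step tangent contraction for noisy tensor power iteration: let v₁ be the top eigenvector of T = Σ_i λ_i v_i^{⊗3} with orthonormal v_i and λ₁ > λ₂ ≥ ... ≥ λ_k > 0. Set Δ = (λ₁−λ₂)/4 and let u ∈ ℝⁿ be a unit vector with tan θ(v₁, u) < 1. Let ε̃ ∈ ℝⁿ be a noise vector with 4‖ε̃‖ ≤ ε(λ₁−λ₂) and 4|⟨v₁, ε̃⟩| ≤ (λ₁−λ₂)cos²θ(v₁,u), for some ε < 1. Then tan θ(v₁, T(I,u,u) + ε̃) ≤ max(ε, ((λ₂+Δε)/(λ₂+2Δ)) tan θ(v₁,u)). -/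

import Mathlib

open scoped RealInnerProductSpace

/-- tan of the angle between a unit vector `a` and a vector `b`:
tan θ(a,b) = ‖(I − aaᵀ)b‖ / |⟨a,b⟫|. -/
noncomputable def tanAngle {n : ℕ} (a b : EuclideanSpace ℝ (Fin n)) : ℝ :=
  ‖b - ⟪a, b⟫ • a‖ / |⟪a, b⟫|

/-!
Write `c = ⟨v₁, u⟩` and `s = ‖u − c v₁‖`, so that `c² + s² = 1` and `tan θ(v₁, u) = s / |c|`.
Orthonormality gives `⟨v₁, T(I,u,u)⟩ = λ₁ c²`, while by Bessel's inequality the component of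
`T(I,u,u)` orthogonal to `v₁` has norm at most `λ₂ s²`. The noise moves the first quantity by at
most `Δ c²` and the second by at most `Δ ε`, so the new tangent is at most
`(λ₂ s² + Δ ε) / ((λ₂ + 3Δ) c²)`, and an elementary inequality bounds this by the claimed maximum.
-/

theorem contraction_ineq_of_eps_le {l D e a s : ℝ} (hl : 0 < l) (hD : 0 ≤ D) (hs : 0 ≤ s)
    (hsa : s ≤ a) (hunit : a ^ 2 + s ^ 2 = 1) (he : e * ((l + D) * a ^ 2) ≤ l * s ^ 2) :
    (l * s ^ 2 + D * e) * ((l + 2 * D) * a) ≤ (l + D * e) * s * ((l + 3 * D) * a ^ 2) := by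
  have ha : 0 < a := by nlinarith
  have hK : 0 ≤ (a ^ 2 + s ^ 2) * (l + 2 * D) - s * a * (l + 3 * D) := by
    nlinarith [mul_nonneg hl.le (sq_nonneg (a - s)), mul_nonneg hD (sq_nonneg (a - s)),
      mul_nonneg (add_nonneg hl.le hD) (mul_nonneg hs ha.le)]
  have hQ : 0 ≤ D * (l + 2 * D) * s ^ 2 - D ^ 2 * s * a + (l + D) * (l + 3 * D) * a ^ 2 := by
    nlinarith [mul_nonneg (mul_nonneg hD (add_nonneg hl.le (mul_nonneg zero_le_two hD)))
        (sq_nonneg s), mul_le_mul_of_nonneg_left (mul_le_mul_of_nonneg_right hsa ha.le)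
        (sq_nonneg D), mul_nonneg hl.le (add_nonneg hl.le hD), mul_nonneg hl.le hD]
  -- `rhs - lhs` is linear and decreasing in `e`; at the extreme `e = l s² / ((l + D) a²)` it
  -- vanishes for `s = a`, whence the factor `a - s`
  rw [← sub_nonneg]
  refine (mul_nonneg_iff_of_pos_left (by positivity : 0 < a * (l + D))).1 ?_
  convert add_nonneg (mul_nonneg (mul_nonneg (mul_nonneg hl.le hs) (sub_nonneg.2 hsa)) hQ)
    (mul_nonneg (mul_nonneg hD hK) (sub_nonneg.2 he)) using 1
  linear_combination a ^ 2 * D * e * (l + D) * (l + 2 * D) * hunit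

theorem div_le_max_contraction {l D e a s : ℝ} (hl : 0 < l) (hD : 0 ≤ D) (hs : 0 ≤ s)
    (hsa : s < a) (hunit : a ^ 2 + s ^ 2 = 1) :
    (l * s ^ 2 + D * e) / ((l + 3 * D) * a ^ 2)
      ≤ max e ((l + D * e) / (l + 2 * D) * (s / a)) := by
  have ha : 0 < a := hs.trans_lt hsa
  have hden : 0 < (l + 3 * D) * a ^ 2 := by positivity
  rcases le_total (l * s ^ 2) (e * ((l + D) * a ^ 2)) with hsmall | hlarge
  · refine le_max_of_le_left ?_
    have he : 0 ≤ e :=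
      nonneg_of_mul_nonneg_left ((by positivity : 0 ≤ l * s ^ 2).trans hsmall) (by positivity)
    have hDe : D * e = D * e * (a ^ 2 + s ^ 2) := by rw [hunit, mul_one]
    rw [div_le_iff₀ hden]
    nlinarith [mul_nonneg (mul_nonneg hD he) (by nlinarith : (0:ℝ) ≤ a ^ 2 - s ^ 2)]
  · refine le_max_of_le_right ?_
    rw [div_mul_div_comm, div_le_div_iff₀ hden (by positivity)]
    exact contraction_ineq_of_eps_le hl hD hs hsa.le hunit hlarge

section

variable {E : Type*} [NormedAddCommGroup E] [InnerProductSpace ℝ E]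

theorem norm_sub_inner_smul_sq {a : E} (ha : ‖a‖ = 1) (x : E) :
    ‖x - ⟪a, x⟫ • a‖ ^ 2 = ‖x‖ ^ 2 - ⟪a, x⟫ ^ 2 := by
  rw [norm_sub_sq_real, inner_smul_right, real_inner_comm, norm_smul, ha, mul_one,
    Real.norm_eq_abs, sq_abs]
  ring

theorem norm_sub_inner_smul_le {a : E} (ha : ‖a‖ = 1) (x : E) : ‖x - ⟪a, x⟫ • a‖ ≤ ‖x‖ := by
  rw [← sq_le_sq₀ (norm_nonneg _) (norm_nonneg _), norm_sub_inner_smul_sq ha]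
  nlinarith [sq_nonneg ⟪a, x⟫]

theorem norm_add_sub_inner_smul_le {a : E} (ha : ‖a‖ = 1) (x y : E) :
    ‖x + y - ⟪a, x + y⟫ • a‖ ≤ ‖x - ⟪a, x⟫ • a‖ + ‖y‖ :=
  calc ‖x + y - ⟪a, x + y⟫ • a‖ = ‖(x - ⟪a, x⟫ • a) + (y - ⟪a, y⟫ • a)‖ := by
        rw [inner_add_right, add_smul]; abel_nf
    _ ≤ ‖x - ⟪a, x⟫ • a‖ + ‖y‖ :=
        (norm_add_le _ _).trans (add_le_add le_rfl (norm_sub_inner_smul_le ha y))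

variable {ι : Type*} [Fintype ι]

/-- The contraction `T(I,u,u)` of the symmetric tensor `T = ∑ i, lam i • v i ⊗ v i ⊗ v i`. -/
def tensorContract (v : ι → E) (lam : ι → ℝ) (u : E) : E :=
  ∑ i, (lam i * ⟪v i, u⟫ ^ 2) • v i

namespace Orthonormal

variable {v : ι → E} (lam : ι → ℝ) (u : E)

theorem inner_tensorContract (hv : Orthonormal ℝ v) (j : ι) :
    ⟪v j, tensorContract v lam u⟫ = lam j * ⟪v j, u⟫ ^ 2 :=
  hv.inner_right_fintype _ j

theorem norm_tensorContract_sub_le [DecidableEq ι] (hv : Orthonormal ℝ v) {j : ι} {M : ℝ}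
    (hM0 : 0 ≤ M) (hM : ∀ i ≠ j, |lam i| ≤ M) :
    ‖tensorContract v lam u - ⟪v j, tensorContract v lam u⟫ • v j‖
      ≤ M * (‖u‖ ^ 2 - ⟪v j, u⟫ ^ 2) := by
  have hsplit : tensorContract v lam u - ⟪v j, tensorContract v lam u⟫ • v j
      = ∑ i ∈ Finset.univ.erase j, (lam i * ⟪v i, u⟫ ^ 2) • v i := by
    rw [hv.inner_tensorContract, tensorContract, ← Finset.add_sum_erase _ _ (Finset.mem_univ j),
      add_sub_cancel_left]
  have hbessel : ∑ i ∈ Finset.univ.erase j, ⟪v i, u⟫ ^ 2 ≤ ‖u‖ ^ 2 - ⟪v j, u⟫ ^ 2 := by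
    have h := hv.sum_inner_products_le (x := u) (s := Finset.univ)
    rw [← Finset.add_sum_erase _ _ (Finset.mem_univ j)] at h
    simp only [Real.norm_eq_abs, sq_abs] at h
    linarith
  calc ‖tensorContract v lam u - ⟪v j, tensorContract v lam u⟫ • v j‖
      ≤ ∑ i ∈ Finset.univ.erase j, ‖(lam i * ⟪v i, u⟫ ^ 2) • v i‖ := hsplit ▸ norm_sum_le _ _
    _ ≤ ∑ i ∈ Finset.univ.erase j, M * ⟪v i, u⟫ ^ 2 := by
        refine Finset.sum_le_sum fun i hi => ?_
        rw [norm_smul, hv.1 i, mul_one, Real.norm_eq_abs, abs_mul, abs_sq]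
        exact mul_le_mul_of_nonneg_right (hM i (Finset.ne_of_mem_erase hi)) (sq_nonneg _)
    _ ≤ M * (‖u‖ ^ 2 - ⟪v j, u⟫ ^ 2) := by
        rw [← Finset.mul_sum]
        exact mul_le_mul_of_nonneg_left hbessel hM0

end Orthonormal

end

section

variable {n : ℕ}

theorem tanAngle_eq_zero_of_inner_eq_zero {a b : EuclideanSpace ℝ (Fin n)} (h : ⟪a, b⟫ = 0) :
    tanAngle a b = 0 := by
  simp [tanAngle, h]

theorem tanAngle_le_div {a x : EuclideanSpace ℝ (Fin n)} {R m : ℝ} (hm : 0 < m)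
    (hR : ‖x - ⟪a, x⟫ • a‖ ≤ R) (hx : m ≤ ⟪a, x⟫) : tanAngle a x ≤ R / m := by
  rw [tanAngle, abs_of_pos (hm.trans_le hx)]
  exact div_le_div₀ ((norm_nonneg _).trans hR) hR hm hx

theorem Orthonormal.tanAngle_tensorContract_add_le {ι : Type*} [Fintype ι] [DecidableEq ι]
    {v : ι → EuclideanSpace ℝ (Fin n)} (hv : Orthonormal ℝ v) (lam : ι → ℝ)
    {u e : EuclideanSpace ℝ (Fin n)} {j : ι} {M δ m : ℝ} (hM0 : 0 ≤ M)
    (hM : ∀ i ≠ j, |lam i| ≤ M) (he : |⟪v j, e⟫| ≤ δ) (hm : 0 < m)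
    (hmj : m ≤ lam j * ⟪v j, u⟫ ^ 2 - δ) :
    tanAngle (v j) (tensorContract v lam u + e) ≤ (M * (‖u‖ ^ 2 - ⟪v j, u⟫ ^ 2) + ‖e‖) / m := by
  refine tanAngle_le_div hm ((norm_add_sub_inner_smul_le (hv.1 j) _ _).trans
    (add_le_add (hv.norm_tensorContract_sub_le lam u hM0 hM) le_rfl)) ?_
  rw [inner_add_right, hv.inner_tensorContract]
  linarith [neg_abs_le ⟪v j, e⟫]

theorem Orthonormal.tanAngle_tensorContract_add_of_inner_eq_zero {ι : Type*} [Fintype ι]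
    {v : ι → EuclideanSpace ℝ (Fin n)} (hv : Orthonormal ℝ v) (lam : ι → ℝ)
    {u e : EuclideanSpace ℝ (Fin n)} {j : ι} (hu : ⟪v j, u⟫ = 0) (he : ⟪v j, e⟫ = 0) :
    tanAngle (v j) (tensorContract v lam u + e) = 0 :=
  tanAngle_eq_zero_of_inner_eq_zero (by
    rw [inner_add_right, hv.inner_tensorContract, hu, he]; ring)

end

/-- One-step tangent contraction for the noisy tensor power iteration:
for T = ∑_i λ_i v_i^{⊗3} with orthonormal v_i, λ₁ > λ₂ ≥ ⋯ ≥ λ_k > 0,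
Δ = (λ₁−λ₂)/4, unit u with tan θ(v₁,u) < 1, and noise ε̃ with
4‖ε̃‖ ≤ ε(λ₁−λ₂) and 4|⟨v₁,ε̃⟩| ≤ (λ₁−λ₂)cos²θ(v₁,u) for some ε < 1:
tan θ(v₁, T(I,u,u)+ε̃) ≤ max(ε, ((λ₂+Δε)/(λ₂+2Δ)) tan θ(v₁,u)). -/
theorem stmt15 (n k : ℕ) (hk : 2 ≤ k)
    (v : Fin k → EuclideanSpace ℝ (Fin n)) (lam : Fin k → ℝ)
    (horth : ∀ i j, ⟪v i, v j⟫ = if i = j then (1 : ℝ) else 0)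
    (hpos : ∀ i, 0 < lam i)
    (hsorted : ∀ i j : Fin k, i ≤ j → lam j ≤ lam i)
    (u noise : EuclideanSpace ℝ (Fin n)) (hu : ‖u‖ = 1)
    (eps : ℝ)
    (Δ : ℝ) (hΔ : Δ = (lam ⟨0, by omega⟩ - lam ⟨1, by omega⟩) / 4)
    (htan : tanAngle (v ⟨0, by omega⟩) u < 1)
    (hnoise1 : 4 * ‖noise‖ ≤ eps * (lam ⟨0, by omega⟩ - lam ⟨1, by omega⟩))
    (hnoise2 : 4 * |⟪v ⟨0, by omega⟩, noise⟫|
        ≤ (lam ⟨0, by omega⟩ - lam ⟨1, by omega⟩) * ⟪v ⟨0, by omega⟩, u⟫ ^ 2) :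
    tanAngle (v ⟨0, by omega⟩) ((∑ i, (lam i * ⟪v i, u⟫ ^ 2) • v i) + noise)
      ≤ max eps ((lam ⟨1, by omega⟩ + Δ * eps) / (lam ⟨1, by omega⟩ + 2 * Δ)
          * tanAngle (v ⟨0, by omega⟩) u) := by
  have hv : Orthonormal ℝ v := orthonormal_iff_ite.mpr horth
  set i₀ : Fin k := ⟨0, by omega⟩
  set i₁ : Fin k := ⟨1, by omega⟩
  set c := ⟪v i₀, u⟫
  have hs : ‖u - c • v i₀‖ ^ 2 = 1 - c ^ 2 := by rw [norm_sub_inner_smul_sq (hv.1 i₀), hu, one_pow]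
  have hl : 0 < lam i₁ := hpos i₁
  have hD : 0 ≤ Δ := by rw [hΔ]; linarith [hsorted i₀ i₁ (Fin.mk_le_mk.2 zero_le_one)]
  have hdom : ∀ i ≠ i₀, |lam i| ≤ lam i₁ := fun i hi =>
    (abs_of_pos (hpos i)).trans_le (hsorted i₁ i (Fin.mk_le_of_le_val
      (Nat.one_le_iff_ne_zero.2 fun h => hi (Fin.ext h))))
  have hd : |⟪v i₀, noise⟫| ≤ Δ * c ^ 2 := by rw [hΔ]; linarith
  have hnoise : ‖noise‖ ≤ Δ * eps := by rw [hΔ]; linarith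
  change tanAngle (v i₀) (tensorContract v lam u + noise) ≤ _
  rcases eq_or_ne c 0 with hc | hc
  · -- `u ⊥ v₁`: both tangents are `x / 0 = 0`
    have hd0 : ⟪v i₀, noise⟫ = 0 := abs_nonpos_iff.1 (by simpa [hc] using hd)
    rw [hv.tanAngle_tensorContract_add_of_inner_eq_zero lam hc hd0,
      tanAngle_eq_zero_of_inner_eq_zero hc, mul_zero]
    exact le_max_right _ _
  · have hlam : lam i₀ = lam i₁ + 4 * Δ := by rw [hΔ]; ring
    have hsc : ‖u - c • v i₀‖ < |c| := (div_lt_one (abs_pos.2 hc)).1 htan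
    calc tanAngle (v i₀) (tensorContract v lam u + noise)
        ≤ (lam i₁ * (‖u‖ ^ 2 - c ^ 2) + ‖noise‖) / ((lam i₁ + 3 * Δ) * c ^ 2) :=
          hv.tanAngle_tensorContract_add_le lam hl.le hdom hd (by positivity)
            (le_of_eq (by rw [hlam]; ring))
      _ ≤ (lam i₁ * ‖u - c • v i₀‖ ^ 2 + Δ * eps) / ((lam i₁ + 3 * Δ) * |c| ^ 2) := by
          rw [hu, one_pow, hs, sq_abs]
          gcongr
      _ ≤ _ := div_le_max_contraction hl hD (norm_nonneg _) hsc (by rw [sq_abs, hs]; ring)
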